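/- For symmetric positive semidefinite matrices A and B of the same size, det(I + A + B) ≤ det(I + A) · det(I + B). -/

import Mathlib

open Matrix
open scoped MatrixOrder

section Aux

variable {n : Type*} [Fintype n] [DecidableEq n]

/-- det of 1 + PSD is at least 1. -/
lemma aux_one_le_det_one_add {P : Matrix n n ℝ} (hP : P.PosSemidef) :
    1 ≤ (1 + P).det := by
  have hH := hP.isHermitian
  have hspec := hH.spectral_theorem
  set U := hH.eigenvectorUnitary with hU
  have hUU : (U : Matrix n n ℝ) * (star U : Matrix n n ℝ) = 1 :=
    (Matrix.mem_unitaryGroup_iff).mp U.2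
  have hUU' : (star U : Matrix n n ℝ) * (U : Matrix n n ℝ) = 1 :=
    (Matrix.mem_unitaryGroup_iff').mp U.2
  have h1 : (1 : Matrix n n ℝ) + P
      = (U : Matrix n n ℝ) * ((1 : Matrix n n ℝ) + Matrix.diagonal (RCLike.ofReal ∘ hH.eigenvalues))
        * (star U : Matrix n n ℝ) := by
    rw [Matrix.mul_add, Matrix.add_mul, Matrix.mul_one, hUU]; rw [Unitary.conjStarAlgAut_apply] at hspec; rw [← hspec]
  have h2 : (1 + P).det = ((1 : Matrix n n ℝ) + Matrix.diagonal (RCLike.ofReal ∘ hH.eigenvalues)).det := by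
    rw [h1, Matrix.det_mul, Matrix.det_mul, mul_comm, ← mul_assoc, ← Matrix.det_mul, hUU',
      Matrix.det_one, one_mul]
  rw [h2]
  have h3 : (1 : Matrix n n ℝ) + Matrix.diagonal (RCLike.ofReal ∘ hH.eigenvalues)
      = Matrix.diagonal (fun i => 1 + hH.eigenvalues i) := by
    rw [← Matrix.diagonal_one, Matrix.diagonal_add]
    rfl
  rw [h3, Matrix.det_diagonal]
  have := Finset.prod_le_prod (f := fun _ : n => (1 : ℝ))
    (g := fun i => 1 + hH.eigenvalues i) (s := Finset.univ)
    (fun i _ => zero_le_one) (fun i _ => by show (1:ℝ) ≤ 1 + hH.eigenvalues i; linarith [show (0:ℝ) ≤ hH.eigenvalues i from hP.eigenvalues_nonneg i])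
  simpa using this

/-- PSD matrices have nonneg determinant. -/
lemma aux_det_nonneg {P : Matrix n n ℝ} (hP : P.PosSemidef) : 0 ≤ P.det := by
  rw [hP.isHermitian.det_eq_prod_eigenvalues]
  exact Finset.prod_nonneg fun i _ => by simpa using hP.eigenvalues_nonneg i

/-- Monotonicity: for M PD and P PSD, det M ≤ det (M + P). -/
lemma aux_det_le_det_add {M P : Matrix n n ℝ} (hM : M.PosDef) (hP : P.PosSemidef) :
    M.det ≤ (M + P).det := by
  have hMinv : M⁻¹.PosDef := hM.inv
  set R := CFC.sqrt M⁻¹ with hRdef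
  have hRps : R.PosSemidef := (CFC.sqrt_nonneg _).posSemidef
  have hRH : Rᴴ = R := hRps.isHermitian
  have hRR : R * R = M⁻¹ := CFC.sqrt_mul_sqrt_self _ hMinv.posSemidef.nonneg
  have hMunit : IsUnit M := hM.isUnit
  have hMinvM : M⁻¹ * M = 1 := Matrix.nonsing_inv_mul M hM.det_pos.ne'.isUnit
  have hMMinv : M * M⁻¹ = 1 := Matrix.mul_nonsing_inv M hM.det_pos.ne'.isUnit
  -- R * M * R = 1
  have hRMR : R * M * R = 1 := by
    have h1 : R * (R * M) = 1 := by rw [← Matrix.mul_assoc, hRR, hMinvM]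
    have h2 : (M * R) * R = 1 := by rw [Matrix.mul_assoc, hRR, hMMinv]
    have hcomm : M * R = R * M := by
      calc M * R = (M * R) * (R * (R * M)) := by rw [h1, Matrix.mul_one]
        _ = ((M * R) * R) * (R * M) := by noncomm_ring
        _ = R * M := by rw [h2, Matrix.one_mul]
    rw [Matrix.mul_assoc, hcomm]; exact h1
  have hdetR_sq : R.det * R.det * M.det = 1 := by
    have := congrArg Matrix.det hRMR
    rw [Matrix.det_mul, Matrix.det_mul, Matrix.det_one] at this
    linarith [this]
  have hdetR_pos : 0 < R.det := by
    rcases lt_or_eq_of_le (aux_det_nonneg hRps) with h | h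
    · exact h
    · exfalso; rw [← h] at hdetR_sq; simp at hdetR_sq
  -- R P R is PSD
  have hRPR : (R * P * R).PosSemidef := by
    have := hP.mul_mul_conjTranspose_same R
    rwa [hRH] at this
  have key : R.det * (M + P).det * R.det = (1 + R * P * R).det := by
    have : R * (M + P) * R = 1 + R * P * R := by
      rw [Matrix.mul_add, Matrix.add_mul, hRMR]
    rw [← this, Matrix.det_mul, Matrix.det_mul]
  have h1le : 1 ≤ R.det * (M + P).det * R.det := key ▸ aux_one_le_det_one_add hRPR
  -- conclude
  nlinarith [hdetR_sq, h1le, hdetR_pos, mul_pos hdetR_pos hdetR_pos]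

end Aux

theorem det_one_add_subadditive (d : ℕ) (A B : Matrix (Fin d) (Fin d) ℝ)
    (hA : A.PosSemidef) (hB : B.PosSemidef) :
    (1 + A + B).det ≤ (1 + A).det * (1 + B).det := by
  set M := 1 + A with hMdef
  have hM : M.PosDef := Matrix.PosDef.add_posSemidef Matrix.PosDef.one hA
  have hMinv : M⁻¹.PosDef := hM.inv
  set R := CFC.sqrt M⁻¹ with hRdef
  have hRps : R.PosSemidef := (CFC.sqrt_nonneg _).posSemidef
  have hRH : Rᴴ = R := hRps.isHermitian
  have hRR : R * R = M⁻¹ := CFC.sqrt_mul_sqrt_self _ hMinv.posSemidef.nonneg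
  set S := CFC.sqrt B with hSdef
  have hSps : S.PosSemidef := (CFC.sqrt_nonneg _).posSemidef
  have hSH : Sᴴ = S := hSps.isHermitian
  have hSS : S * S = B := CFC.sqrt_mul_sqrt_self _ hB.nonneg
  have hMinvM : M⁻¹ * M = 1 := Matrix.nonsing_inv_mul M hM.det_pos.ne'.isUnit
  have hMMinv : M * M⁻¹ = 1 := Matrix.mul_nonsing_inv M hM.det_pos.ne'.isUnit
  have hRMR : R * M * R = 1 := by
    have h1 : R * (R * M) = 1 := by rw [← Matrix.mul_assoc, hRR, hMinvM]
    have h2 : (M * R) * R = 1 := by rw [Matrix.mul_assoc, hRR, hMMinv]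
    have hcomm : M * R = R * M := by
      calc M * R = (M * R) * (R * (R * M)) := by rw [h1, Matrix.mul_one]
        _ = ((M * R) * R) * (R * M) := by noncomm_ring
        _ = R * M := by rw [h2, Matrix.one_mul]
    rw [Matrix.mul_assoc, hcomm]; exact h1
  have hdetR_sq : R.det * R.det * M.det = 1 := by
    have := congrArg Matrix.det hRMR
    rw [Matrix.det_mul, Matrix.det_mul, Matrix.det_one] at this
    linarith [this]
  have hdetR_pos : 0 < R.det := by
    rcases lt_or_eq_of_le (aux_det_nonneg hRps) with h | h
    · exact h
    · exfalso; rw [← h] at hdetR_sq; simp at hdetR_sq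
  -- step 1: (det R)^2 * det(M + B) = det (1 + S M⁻¹ S)
  have step1 : R.det * (M + B).det * R.det = (1 + S * M⁻¹ * S).det := by
    have e1 : R * (M + B) * R = 1 + R * B * R := by
      rw [Matrix.mul_add, Matrix.add_mul, hRMR]
    have e2 : (1 + R * B * R).det = (1 + S * M⁻¹ * S).det := by
      have h1 : R * B * R = (R * S) * (S * R) := by
        rw [← hSS]; noncomm_ring
      have h2 : (S * R) * (R * S) = S * M⁻¹ * S := by
        rw [← hRR]; noncomm_ring
      rw [h1, ← h2, Matrix.det_one_add_mul_comm]
    rw [← e2, ← e1, Matrix.det_mul, Matrix.det_mul]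
  -- the PSD/PD facts for the monotonicity step
  have hSMinvS : (S * M⁻¹ * S).PosSemidef := by
    have := hMinv.posSemidef.mul_mul_conjTranspose_same S
    rwa [hSH] at this
  have hPD : (1 + S * M⁻¹ * S).PosDef := Matrix.PosDef.add_posSemidef Matrix.PosDef.one hSMinvS
  -- 1 - M⁻¹ = R * A * R is PSD
  have hRAR : (R * A * R).PosSemidef := by
    have := hA.mul_mul_conjTranspose_same R
    rwa [hRH] at this
  have hone_sub : (1 : Matrix (Fin d) (Fin d) ℝ) - M⁻¹ = R * A * R := by
    have : R * (M - 1) * R = R * M * R - R * R := by noncomm_ring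
    have hMA : M - 1 = A := by rw [hMdef]; abel
    rw [← hMA]; rw [this, hRMR, hRR]
  have hP' : (S * (1 - M⁻¹) * S).PosSemidef := by
    rw [hone_sub]
    have := hRAR.mul_mul_conjTranspose_same S
    rwa [hSH] at this
  have hsum : (1 + S * M⁻¹ * S) + S * (1 - M⁻¹) * S = 1 + B := by
    rw [← hSS]; noncomm_ring
  have step2 : (1 + S * M⁻¹ * S).det ≤ (1 + B).det := by
    have := aux_det_le_det_add hPD hP'
    rwa [hsum] at this
  -- combine
  have hMB : (1 : Matrix (Fin d) (Fin d) ℝ) + A + B = M + B := by rw [hMdef]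
  rw [hMB]
  have hfinal : R.det * (M + B).det * R.det ≤ (1 + B).det := step1 ▸ step2
  nlinarith [hdetR_sq, hfinal, hdetR_pos, hM.det_pos, aux_det_nonneg (hM.posSemidef.add hB)]
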